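/- arXiv:math/0309121 — 7 statements merged into one kernel-verified Lean document; each statement's English description precedes it below -/
import Mathlib

section
/- Let G = ⟨x₁,...,x_k ∣ R⟩, let φ be an injective endomorphism of G given by words w₁,...,w_k, and for a group H let φ_H : H^k → H^k send (h₁,...,h_k) to (w₁(h₁,...,h_k),...,w_k(h₁,...,h_k)). Suppose that for some w ≠ 1 in G there exists a finite group H and h = (h₁,...,h_k) ∈ H^k such that (i) the hᵢ satisfy all relations of R, (ii) h is a fixed point of some positive power of φ_H, and (iii) w(h₁,...,h_k) ≠ 1 in H. Then w is separated from 1 by a homomorphism of HNN_φ(G) onto a finite group. -/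
/-- The relations of the ascending HNN extension (mapping torus) of an endomorphism `φ`
of a group `G`: the multiplication table of `G` together with `t g t⁻¹ = φ g`. -/
def hnnRel {G : Type} [Group G] (φ : G →* G) : Set (FreeGroup (G ⊕ Unit)) :=
  { r | (∃ g h : G, r = FreeGroup.of (Sum.inl g) * FreeGroup.of (Sum.inl h) *
            (FreeGroup.of (Sum.inl (g * h)))⁻¹) ∨
        (∃ g : G, r = FreeGroup.of (Sum.inr ()) * FreeGroup.of (Sum.inl g) *
            (FreeGroup.of (Sum.inr ()))⁻¹ * (FreeGroup.of (Sum.inl (φ g)))⁻¹) }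

/-- The ascending HNN extension `HNN_φ(G)`. -/
def HNNExt {G : Type} [Group G] (φ : G →* G) : Type := PresentedGroup (hnnRel φ)

instance {G : Type} [Group G] (φ : G →* G) : Group (HNNExt φ) := by
  unfold HNNExt; infer_instance

/-- The image of `g ∈ G` in the HNN extension. -/
def hnnBase {G : Type} [Group G] (φ : G →* G) (g : G) : HNNExt φ :=
  PresentedGroup.of (Sum.inl g)

/-- The stable letter `t` of the HNN extension. -/
def hnnT {G : Type} [Group G] (φ : G →* G) : HNNExt φ :=
  PresentedGroup.of (Sum.inr ())

/-! Evaluation at `h` is a homomorphism `f : G → H`, and (ii) says `f ∘ φⁿ = f`. Hence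
`g ↦ (f (φᵃ g))_{a ∈ ℤ/n}` together with `t ↦` a generator of the top group `C_n` defines a
homomorphism `HNN_φ(G) → H ≀ C_n`: conjugating the base by the cyclic shift realizes `φ`. Its
coordinate at `a = 0` is `f`, which does not kill `w` by (iii), and `H ≀ C_n` is finite. -/

namespace RegularWreathProduct

variable {D Q : Type*} [Group D] [Group Q]

def base : (Q → D) →* D ≀ᵣ Q where
  toFun b := ⟨b, 1⟩
  map_one' := rfl
  map_mul' _ _ := by ext <;> simp

theorem inl_mul_base_mul_inv (q : Q) (b : Q → D) :
    inl q * base b * (inl q)⁻¹ = base fun x => b (q⁻¹ * x) := by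
  ext x <;> simp [base]

end RegularWreathProduct

namespace HNNExt

variable {G : Type} [Group G] {φ : G →* G} {K : Type*} [Group K]

def lift (β : G →* K) (τ : K) (hβ : ∀ g, τ * β g * τ⁻¹ = β (φ g)) : HNNExt φ →* K :=
  PresentedGroup.toGroup (f := Sum.elim β fun _ => τ) <| by
    rintro r (⟨g, g', rfl⟩ | ⟨g, rfl⟩) <;> simp [hβ]

@[simp]
theorem lift_base (β : G →* K) (τ : K) (hβ : ∀ g, τ * β g * τ⁻¹ = β (φ g)) (g : G) :
    lift β τ hβ (hnnBase φ g) = β g :=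
  PresentedGroup.toGroup.of _

end HNNExt

theorem apply_iterate_eq_apply_iterate_mod {α β : Type*} {φ : α → α} {f : α → β} {n : ℕ}
    (hf : ∀ g, f (φ^[n] g) = f g) (m : ℕ) (g : α) :
    f (φ^[m] g) = f (φ^[m % n] g) := by
  have hmul : ∀ q x, f (φ^[n * q] x) = f x := by
    intro q
    induction q with
    | zero => simp
    | succ q ih => intro x; rw [Nat.mul_succ, add_comm, Function.iterate_add_apply, hf, ih]
  conv_lhs => rw [← Nat.div_add_mod m n, Function.iterate_add_apply, hmul]

section Periodic

variable {G H : Type*} [Group G] [Group H] {φ : G →* G} {n : ℕ} {f : G →* H}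

variable (φ n f) in
def orbitHom : G →* (Multiplicative (ZMod n) → H) where
  toFun g a := f (φ^[a.toAdd.val] g)
  map_one' := by ext; simp [iterate_map_one]
  map_mul' _ _ := by ext; simp [iterate_map_mul]

theorem orbitHom_apply (g : G) (a : Multiplicative (ZMod n)) :
    orbitHom φ n f g a = f (φ^[a.toAdd.val] g) :=
  rfl

theorem orbitHom_map [NeZero n] (hf : ∀ g, f (φ^[n] g) = f g) (g : G)
    (a : Multiplicative (ZMod n)) :
    orbitHom φ n f (φ g) a = orbitHom φ n f g (Multiplicative.ofAdd 1 * a) := by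
  have hval : (Multiplicative.ofAdd 1 * a).toAdd.val = (a.toAdd.val + 1) % n := by
    rw [← ZMod.val_natCast, toAdd_mul, toAdd_ofAdd, Nat.cast_succ, ZMod.natCast_zmod_val, add_comm]
  rw [orbitHom_apply, orbitHom_apply, hval, ← apply_iterate_eq_apply_iterate_mod hf,
    Function.iterate_succ_apply]

end Periodic

section PeriodicLift

open RegularWreathProduct

variable {G : Type} [Group G] {φ : G →* G} {H : Type*} [Group H] {n : ℕ} [NeZero n] {f : G →* H}

def periodicLift (hf : ∀ g, f (φ^[n] g) = f g) : HNNExt φ →* H ≀ᵣ Multiplicative (ZMod n) :=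
  HNNExt.lift (base.comp (orbitHom φ n f)) (inl (Multiplicative.ofAdd (-1))) fun g => by
    rw [MonoidHom.comp_apply, MonoidHom.comp_apply, inl_mul_base_mul_inv]
    congr 1
    ext a
    rw [orbitHom_map hf, ← ofAdd_neg, neg_neg]

theorem periodicLift_base_left_one (hf : ∀ g, f (φ^[n] g) = f g) (g : G) :
    (periodicLift hf (hnnBase φ g)).left 1 = f g := by
  simp [periodicLift, base, orbitHom_apply]

end PeriodicLift

theorem MonoidHom.exists_surjective_finite_map_ne_one {Γ K : Type} [Group Γ] [Group K] [Finite K]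
    (ψ : Γ →* K) {x : Γ} (hx : ψ x ≠ 1) :
    ∃ (K' : Type) (_ : Group K') (_ : Finite K') (ψ' : Γ →* K'),
      Function.Surjective ψ' ∧ ψ' x ≠ 1 :=
  ⟨ψ.range, inferInstance, inferInstance, ψ.rangeRestrict, ψ.rangeRestrict_surjective,
    fun h => hx (by simpa using congrArg Subtype.val h)⟩

section Words

variable {α H : Type*} [Group H] {R : Set (FreeGroup α)}
  {φ : PresentedGroup R →* PresentedGroup R} {wWords : α → FreeGroup α} {h : α → H}

theorem map_mk_eq_mk_lift
    (hφdef : ∀ i, φ (PresentedGroup.of i) = PresentedGroup.mk R (wWords i)) (x : FreeGroup α) :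
    φ (PresentedGroup.mk R x) = PresentedGroup.mk R (FreeGroup.lift wWords x) :=
  (FreeGroup.lift_unique (φ.comp (PresentedGroup.mk R)) hφdef).trans
    (FreeGroup.lift_unique ((PresentedGroup.mk R).comp (FreeGroup.lift wWords)) (by simp)).symm

theorem toGroup_iterate_mk
    (hφdef : ∀ i, φ (PresentedGroup.of i) = PresentedGroup.mk R (wWords i))
    (hrel : ∀ r ∈ R, FreeGroup.lift h r = 1) (m : ℕ) (x : FreeGroup α) :
    PresentedGroup.toGroup hrel (φ^[m] (PresentedGroup.mk R x)) =
      FreeGroup.lift ((fun v : α → H => fun j => FreeGroup.lift v (wWords j))^[m] h) x := by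
  induction m generalizing x with
  | zero => rfl
  | succ m ih =>
    rw [Function.iterate_succ_apply, map_mk_eq_mk_lift hφdef, ih, Function.iterate_succ_apply']
    exact FreeGroup.lift_unique ((FreeGroup.lift _).comp (FreeGroup.lift wWords)) (by simp)

end Words

theorem separated_of_finite_orbit_witness
    {k : ℕ} (R : Set (FreeGroup (Fin k)))
    (φ : PresentedGroup R →* PresentedGroup R)
    (wWords : Fin k → FreeGroup (Fin k))
    (hφdef : ∀ i : Fin k, φ (PresentedGroup.of i) = PresentedGroup.mk R (wWords i))
    (w : PresentedGroup R)
    (wd : FreeGroup (Fin k)) (hwd : PresentedGroup.mk R wd = w)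
    (H : Type) (_ : Group H) (_ : Finite H)
    (h : Fin k → H)
    -- (i) the coordinates of `h` satisfy all the relations from `R`
    (hrel : ∀ r ∈ R, FreeGroup.lift h r = 1)
    -- (ii) `h` is fixed by some positive power of `φ_H`
    (hfix : ∃ n : ℕ, 1 ≤ n ∧
      (fun v : Fin k → H => fun j => FreeGroup.lift v (wWords j))^[n] h = h)
    -- (iii) `w(h₁,...,h_k) ≠ 1` in `H`
    (hwne : FreeGroup.lift h wd ≠ 1) :
    ∃ (H' : Type) (_ : Group H') (_ : Finite H') (ψ : HNNExt φ →* H'),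
      Function.Surjective ψ ∧ ψ (hnnBase φ w) ≠ 1 := by
  obtain ⟨n, hn, hper⟩ := hfix
  have : NeZero n := ⟨by omega⟩
  set f := PresentedGroup.toGroup hrel
  have hf : ∀ g, f (φ^[n] g) = f g := by
    intro g
    obtain ⟨x, rfl⟩ := PresentedGroup.mk_surjective R g
    rw [toGroup_iterate_mk hφdef hrel, hper]
    rfl
  have hfw : f w ≠ 1 := by rwa [← hwd]
  refine (periodicLift hf).exists_surjective_finite_map_ne_one fun h1 => hfw ?_
  rw [← periodicLift_base_left_one hf, h1]
  rfl
end

section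
/- Let f₁,...,f_n ∈ 𝔽_Q[x₁,...,x_n] and let Q exceed the degree of every fᵢ. Then the ideal I_Q generated by f₁ - x₁^Q, ..., f_n - x_n^Q in 𝔽_Q[x₁,...,x_n] has finite colength, i.e. the quotient ring 𝔽_Q[x₁,...,x_n]/I_Q is a finite-dimensional 𝔽_Q-vector space. -/
open MvPolynomial

/-- The ideal `I_Q = (f₁ - x₁^Q, ..., f_n - x_n^Q)` has finite colength when `Q`
exceeds the degrees of the `fᵢ`. -/
theorem finite_colength {F : Type} [Field F] [Finite F] {n : ℕ}
    (f : Fin n → MvPolynomial (Fin n) F) (Q : ℕ) (hQ : Q = Nat.card F)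
    (hdeg : ∀ i, (f i).totalDegree < Q) :
    FiniteDimensional F
      (MvPolynomial (Fin n) F ⧸
        Ideal.span (Set.range fun i : Fin n => f i - X i ^ Q)) := by
  classical
  set I : Ideal (MvPolynomial (Fin n) F) :=
    Ideal.span (Set.range fun i : Fin n => f i - X i ^ Q) with hI
  let π := Ideal.Quotient.mkₐ F I
  let g : (Fin n → Fin Q) → (MvPolynomial (Fin n) F ⧸ I) :=
    fun d => π (monomial (Finsupp.equivFunOnFinite.symm fun i => (d i : ℕ)) 1)
  set M : Submodule F (MvPolynomial (Fin n) F ⧸ I) := Submodule.span F (Set.range g) with hM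
  have hXQ : ∀ i, π (X i ^ Q) = π (f i) := by
    intro i
    refine (Ideal.Quotient.eq.mpr ?_).symm
    exact Ideal.subset_span ⟨i, rfl⟩
  have key : ∀ k, ∀ p : MvPolynomial (Fin n) F, p.totalDegree < k → π p ∈ M := by
    intro k
    induction k using Nat.strong_induction_on with
    | _ k ih =>
      intro p hp
      rw [p.as_sum, map_sum]
      refine Submodule.sum_mem _ fun d hd => ?_
      have hc : coeff d p ≠ 0 := mem_support_iff.mp hd
      have hdsum : (d.sum fun _ e => e) ≤ p.totalDegree := le_totalDegree hd
      by_cases hcase : ∀ i, d i < Q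
      · have hmono : monomial d (coeff d p) = (coeff d p) • monomial d (1 : F) := by
          rw [smul_monomial, smul_eq_mul, mul_one]
        rw [hmono, map_smul π]
        refine Submodule.smul_mem _ _ ?_
        refine Submodule.subset_span ⟨fun i => ⟨d i, hcase i⟩, ?_⟩
        simp only [g]
        congr 1
        congr 1
        exact (Finsupp.equivFunOnFinite_symm_coe d).symm ▸ rfl
      · push_neg at hcase
        obtain ⟨i, hi⟩ := hcase
        set d' := d - Finsupp.single i Q with hd'
        have hle : Finsupp.single i Q ≤ d := Finsupp.single_le_iff.mpr hi
        have hdd : d' + Finsupp.single i Q = d := tsub_add_cancel_of_le hle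
        have hmon : monomial d (coeff d p) = monomial d' (coeff d p) * X i ^ Q := by
          rw [X_pow_eq_monomial, monomial_mul, mul_one, hdd]
        have hre : π (monomial d (coeff d p)) = π (monomial d' (coeff d p) * f i) := by
          rw [map_mul, ← hXQ i, ← map_mul, hmon]
        rw [hre]
        have hsum : (d.sum fun _ e => e) = (d'.sum fun _ e => e) + Q := by
          rw [← hdd, Finsupp.sum_add_index' (fun _ => rfl) (fun _ _ _ => rfl),
            Finsupp.sum_single_index rfl]
        have hdegq : (monomial d' (coeff d p) * f i).totalDegree < d.sum fun _ e => e := by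
          have h1 : (monomial d' (coeff d p) * f i).totalDegree
              ≤ (d'.sum fun _ e => e) + (f i).totalDegree := by
            refine le_trans (totalDegree_mul _ _) ?_
            rw [totalDegree_monomial _ hc]
          have h2 := hdeg i
          omega
        exact ih (d.sum fun _ e => e) (lt_of_le_of_lt hdsum hp) _ hdegq
  have hspan : M = ⊤ := by
    rw [eq_top_iff]
    rintro x -
    obtain ⟨p, rfl⟩ := Ideal.Quotient.mkₐ_surjective F (I := I) x
    exact key (p.totalDegree + 1) p (Nat.lt_succ_self _)
  exact ⟨Submodule.fg_def.mpr ⟨Set.range g, Set.finite_range g, by rw [← hM, hspan]⟩⟩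
end

section
/- Let Φ : 𝔸ⁿ → 𝔸ⁿ be given by polynomials f₁,...,f_n over 𝔽_q, let f_i^{(j)} denote the i-th coordinate of the j-th iterate Φ^j, and let I_Q be the ideal generated by fᵢ - xᵢ^Q where Q is a power of q. Then for all 1 ≤ i ≤ n and all j ≥ 1, the polynomial f_i^{(j)}(x₁,...,x_n) - x_i^{Q^j} belongs to I_Q. -/
open MvPolynomial

/-- `iterCoord f j i` is `f_i^{(j)}`, the `i`-th coordinate polynomial of the `j`-th
iterate of the polynomial self-map of `𝔸ⁿ` with coordinates `f` (so `f_i^{(0)} = xᵢ`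
and `f_i^{(j+1)} = f_i(f₁^{(j)},...,f_n^{(j)})`). -/
noncomputable def iterCoord {F : Type} [CommRing F] {n : ℕ}
    (f : Fin n → MvPolynomial (Fin n) F) : ℕ → Fin n → MvPolynomial (Fin n) F
  | 0 => fun i => X i
  | j + 1 => fun i => bind₁ (iterCoord f j) (f i)

/-- Frobenius identity: substituting `X k ^ q^t` into a polynomial over a finite field
with `q` elements equals raising the polynomial to the power `q^t`. -/
lemma bind₁_X_pow_card_pow {F : Type} [Field F] [Finite F] {n : ℕ}
    (t : ℕ) (g : MvPolynomial (Fin n) F) :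
    bind₁ (fun k : Fin n => (X k : MvPolynomial (Fin n) F) ^ (Nat.card F) ^ t) g
      = g ^ (Nat.card F) ^ t := by
  cases nonempty_fintype F
  obtain ⟨p, hp⟩ := CharP.exists F
  haveI : CharP F p := hp
  obtain ⟨e, hpp, hcard⟩ := FiniteField.card F p
  haveI : Fact p.Prime := ⟨hpp⟩
  have hq : Nat.card F = p ^ (e : ℕ) := by rw [Nat.card_eq_fintype_card, hcard]
  induction g using MvPolynomial.induction_on with
  | C a =>
    rw [bind₁_C_right, ← C_pow]
    congr 1
    rw [Nat.card_eq_fintype_card]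
    exact (FiniteField.pow_card_pow t a).symm
  | add g₁ g₂ h₁ h₂ =>
    rw [map_add, h₁, h₂]
    simp only [hq, ← pow_mul]
    exact (add_pow_char_pow (R := MvPolynomial (Fin n) F) (p := p) ..).symm
  | mul_X g i h =>
    rw [map_mul, h, bind₁_X_right, mul_pow]

/-- Substituting ideal-congruent families into a polynomial yields ideal-congruent results. -/
lemma bind₁_sub_bind₁_mem {F : Type} [Field F] {n : ℕ}
    (I : Ideal (MvPolynomial (Fin n) F)) (g h : Fin n → MvPolynomial (Fin n) F)
    (hgh : ∀ k, g k - h k ∈ I) (p : MvPolynomial (Fin n) F) :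
    bind₁ g p - bind₁ h p ∈ I := by
  induction p using MvPolynomial.induction_on with
  | C a => simp
  | add p₁ p₂ h₁ h₂ =>
    have : bind₁ g (p₁ + p₂) - bind₁ h (p₁ + p₂)
        = (bind₁ g p₁ - bind₁ h p₁) + (bind₁ g p₂ - bind₁ h p₂) := by
      rw [map_add, map_add]; ring
    rw [this]; exact I.add_mem h₁ h₂
  | mul_X p i hI =>
    have : bind₁ g (p * X i) - bind₁ h (p * X i)
        = (bind₁ g p - bind₁ h p) * bind₁ g (X i)
          + bind₁ h p * (bind₁ g (X i) - bind₁ h (X i)) := by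
      rw [map_mul, map_mul]; ring
    rw [this]
    exact I.add_mem (I.mul_mem_right _ hI)
      (I.mul_mem_left _ (by rw [bind₁_X_right, bind₁_X_right]; exact hgh i))

theorem iterCoord_sub_pow_mem {F : Type} [Field F] [Finite F] {n : ℕ}
    (f : Fin n → MvPolynomial (Fin n) F) (m : ℕ) (hm : 1 ≤ m) :
    ∀ (j : ℕ), 1 ≤ j → ∀ i : Fin n,
      iterCoord f j i - X i ^ ((Nat.card F) ^ m) ^ j ∈
        Ideal.span (Set.range fun i : Fin n => f i - X i ^ ((Nat.card F) ^ m)) := by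
  set Q := (Nat.card F) ^ m with hQ
  set I := Ideal.span (Set.range fun i : Fin n => f i - X i ^ Q) with hI
  have hbase : ∀ i : Fin n, f i - X i ^ Q ∈ I :=
    fun i => Ideal.subset_span ⟨i, rfl⟩
  intro j
  induction j with
  | zero => intro h; omega
  | succ j ih =>
    intro _ i
    rcases Nat.eq_zero_or_pos j with hj | hj
    · subst hj
      show bind₁ (iterCoord f 0) (f i) - X i ^ Q ^ 1 ∈ I
      have : bind₁ (iterCoord f 0) (f i) = f i := by
        show bind₁ (fun k => X k) (f i) = f i
        rw [show (fun k : Fin n => (X k : MvPolynomial (Fin n) F)) = X from rfl,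
          bind₁_X_left, AlgHom.id_apply]
      rw [this, pow_one]
      exact hbase i
    · have ihj := ih hj
      show bind₁ (iterCoord f j) (f i) - X i ^ Q ^ (j + 1) ∈ I
      have h1 : bind₁ (iterCoord f j) (f i)
          - bind₁ (fun k : Fin n => (X k : MvPolynomial (Fin n) F) ^ Q ^ j) (f i) ∈ I :=
        bind₁_sub_bind₁_mem I _ _ (fun k => ihj k) (f i)
      have h2 : bind₁ (fun k : Fin n => (X k : MvPolynomial (Fin n) F) ^ Q ^ j) (f i)
          = (f i) ^ Q ^ j := by
        have h := bind₁_X_pow_card_pow (m * j) (f i)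
        rw [pow_mul] at h
        exact h
      have h3 : (f i) ^ Q ^ j - X i ^ Q ^ (j + 1) ∈ I := by
        have hdvd : f i - X i ^ Q ∣ (f i) ^ Q ^ j - (X i ^ Q) ^ Q ^ j :=
          sub_dvd_pow_sub_pow _ _ _
        have : (X i ^ Q : MvPolynomial (Fin n) F) ^ Q ^ j = X i ^ Q ^ (j + 1) := by
          rw [← pow_mul, ← pow_succ']
        rw [this] at hdvd
        obtain ⟨c, hc⟩ := hdvd
        rw [hc]
        exact I.mul_mem_right _ (hbase i)
      have : bind₁ (iterCoord f j) (f i) - X i ^ Q ^ (j + 1)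
          = (bind₁ (iterCoord f j) (f i)
              - bind₁ (fun k : Fin n => (X k : MvPolynomial (Fin n) F) ^ Q ^ j) (f i))
            + ((f i) ^ Q ^ j - X i ^ Q ^ (j + 1)) := by
        rw [h2]; ring
      rw [this]
      exact I.add_mem h1 h3
end

section
/- Let K be a field, Q a positive integer, and f₁,...,f_n ∈ K[x₁,...,x_n] with deg fᵢ < Q for all i. Let P ∈ K[x₁,...,x_n] be a nonzero polynomial with deg P < Q. Then P does not belong to the ideal generated by f₁ - x₁^Q, ..., f_n - x_n^Q. Equivalently, if P = Σᵢ uᵢ·(fᵢ - xᵢ^Q) for some polynomials uᵢ, then P = 0. -/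
/-!
Write `P = ∑ uᵢ (fᵢ - Xᵢ ^ Q)` with all `uᵢ` of degree at most `d`. As `deg P < Q` and
`deg fᵢ < Q`, the degree `d + Q` part of this identity reads `∑ vᵢ Xᵢ ^ Q = 0`, where `vᵢ` is the
degree `d` part of `uᵢ`. The syzygies of the pure powers `Xᵢ ^ Q` are the Koszul ones:
`vᵢ = ∑ⱼ wᵢⱼ Xⱼ ^ Q` with `w` alternating and homogeneous of degree `d - Q`. Replacing `uᵢ` by
`uᵢ + ∑ⱼ wᵢⱼ (fⱼ - Xⱼ ^ Q)` does not change the sum and removes the degree `d` parts, so by descent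
all `uᵢ` can be made zero, and then `P = 0`.
-/

open MvPolynomial

lemma Finset.sum_add_sum_mul_mul_of_alternating {ι A : Type*} [Fintype ι] [CommRing A]
    (u g : ι → A) (W : ι → ι → A) (hanti : ∀ i j, W j i = -W i j) (hdiag : ∀ i, W i i = 0) :
    ∑ i, (u i + ∑ j, W i j * g j) * g i = ∑ i, u i * g i := by
  have hcancel : ∑ i, ∑ j, W i j * g j * g i = 0 := by
    rw [← Finset.sum_product']
    refine Finset.sum_involution (fun p _ => p.swap) (fun p _ => ?_) (fun p _ hp hswap => ?_)
      (fun _ _ => Finset.mem_univ _) (fun _ _ => rfl)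
    · simp only [Prod.fst_swap, Prod.snd_swap, hanti p.1 p.2]
      ring
    · obtain ⟨i, j⟩ := p
      obtain rfl : j = i := congrArg Prod.fst hswap
      simp [hdiag] at hp
  simp only [add_mul, Finset.sum_add_distrib, Finset.sum_mul, hcancel, add_zero]

namespace MvPolynomial

variable {σ R : Type*} [CommRing R]

section Homogeneous

attribute [local instance] MvPolynomial.gradedAlgebra

lemma homogeneousComponent_mul_of_isHomogeneous {p q : MvPolynomial σ R} {k : ℕ}
    (hq : q.IsHomogeneous k) (n : ℕ) :
    homogeneousComponent n (p * q) =
      if k ≤ n then homogeneousComponent (n - k) p * q else 0 := by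
  have := DirectSum.coe_decompose_mul_of_right_mem (homogeneousSubmodule σ R) n (a := p)
    (show q ∈ homogeneousSubmodule σ R k from hq)
  simpa [← decomposition.decompose'_apply] using this

lemma totalDegree_le_of_homogeneousComponent_eq_zero {p : MvPolynomial σ R} {d : ℕ}
    (h : ∀ k, d < k → homogeneousComponent k p = 0) : p.totalDegree ≤ d := by
  refine Finset.sup_le fun m hm => ?_
  by_contra! hlt
  have hm0 := congrArg (coeff m) (h m.degree hlt)
  rw [coeff_homogeneousComponent, if_pos rfl, coeff_zero] at hm0
  exact mem_support_iff.mp hm hm0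

lemma eq_zero_of_homogeneousComponent_eq_zero {p : MvPolynomial σ R}
    (h : ∀ k, homogeneousComponent k p = 0) : p = 0 := by
  rw [← sum_homogeneousComponent p]
  exact Finset.sum_eq_zero fun k _ => h k

end Homogeneous

lemma mul_X_pow_divMonomial_single (p : MvPolynomial σ R) (a : σ) (k : ℕ) :
    (p * X a ^ k).divMonomial (Finsupp.single a k) = p := by
  rw [X_pow_eq_monomial]
  exact divMonomial_mul_monomial _ _

lemma mul_X_pow_divMonomial_single_of_ne {i a : σ} (h : i ≠ a) (k l : ℕ)
    (p : MvPolynomial σ R) :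
    (p * X i ^ k).divMonomial (Finsupp.single a l) =
      p.divMonomial (Finsupp.single a l) * X i ^ k := by
  ext m
  have hle : Finsupp.single i k ≤ m + Finsupp.single a l ↔ Finsupp.single i k ≤ m := by
    simp [Finsupp.single_le_iff, h]
  rw [coeff_divMonomial, X_pow_eq_monomial, coeff_mul_monomial', coeff_mul_monomial',
    add_comm _ m]
  simp only [hle]
  split_ifs with hm
  · rw [coeff_divMonomial, add_comm _ (m - _), tsub_add_eq_add_tsub hm]
  · rfl

lemma sum_divMonomial {ι : Type*} (s : Finset ι) (g : ι → MvPolynomial σ R) (m : σ →₀ ℕ) :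
    (∑ i ∈ s, g i).divMonomial m = ∑ i ∈ s, (g i).divMonomial m :=
  map_sum (AddMonoidHom.mk' (divMonomial · m) fun p q => add_divMonomial p q m) g s

theorem exists_alternating_of_sum_mul_X_pow_eq_zero (e : σ → ℕ) (s : Finset σ)
    (v : σ → MvPolynomial σ R) (hv : ∑ i ∈ s, v i * X i ^ e i = 0) :
    ∃ w : σ → σ → MvPolynomial σ R, (∀ i j, w j i = -w i j) ∧ (∀ i, w i i = 0) ∧
      ∀ i ∈ s, v i = ∑ j ∈ s, w i j * X j ^ e j := by
  classical
  induction s using Finset.induction_on generalizing v with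
  | empty => exact ⟨0, by simp, by simp, by simp⟩
  | @insert a s ha ih =>
    set c := fun i => (v i).divMonomial (Finsupp.single a (e a))
    rw [Finset.sum_insert ha] at hv
    have hne : ∀ j ∈ s, j ≠ a := fun j hj => ne_of_mem_of_not_mem hj ha
    have hva : v a = -∑ j ∈ s, c j * X j ^ e j := by
      have := congrArg (divMonomial · (Finsupp.single a (e a))) hv
      simp only [add_divMonomial, sum_divMonomial, mul_X_pow_divMonomial_single,
        zero_divMonomial] at this
      rw [Finset.sum_congr rfl fun j hj => mul_X_pow_divMonomial_single_of_ne (hne j hj) _ _ _]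
        at this
      exact eq_neg_of_add_eq_zero_left this
    obtain ⟨w, hanti, hdiag, hw⟩ := ih (fun i => v i - c i * X a ^ e a) (by
      have hfac : ∑ i ∈ s, c i * X a ^ e a * X i ^ e i = X a ^ e a * ∑ i ∈ s, c i * X i ^ e i := by
        rw [Finset.mul_sum]
        exact Finset.sum_congr rfl fun _ _ => by ring
      simp only [sub_mul, Finset.sum_sub_distrib, hfac]
      linear_combination hv - X a ^ e a * hva)
    refine ⟨fun i j => if i = a then (if j = a then 0 else -c j)
      else if j = a then c i else w i j, ?_, ?_, ?_⟩
    · intro i j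
      by_cases hi : i = a <;> by_cases hj : j = a <;> simp [hi, hj, hanti i j]
    · intro i
      by_cases hi : i = a <;> simp [hi, hdiag i]
    · intro i hi
      rw [Finset.sum_insert ha]
      rcases Finset.mem_insert.mp hi with rfl | hi
      · simp only [if_true, zero_mul, zero_add]
        rw [hva, ← Finset.sum_neg_distrib]
        refine Finset.sum_congr rfl fun j hj => ?_
        rw [if_neg (hne j hj), neg_mul]
      · simp only [if_neg (hne i hi), if_true]
        rw [Finset.sum_congr rfl fun j hj => by rw [if_neg (hne j hj)], ← hw i hi]
        ring

section Reduction

variable [Fintype σ] {Q : ℕ} {f : σ → MvPolynomial σ R} {P : MvPolynomial σ R}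
  {u : σ → MvPolynomial σ R} {d : ℕ}

lemma sum_homogeneousComponent_mul_X_pow_eq_zero (hf : ∀ i, (f i).totalDegree < Q)
    (hP : P.totalDegree < Q) (hu : ∀ i k, d < k → homogeneousComponent k (u i) = 0)
    (hrep : ∑ i, u i * (f i - X i ^ Q) = P) :
    ∑ i, homogeneousComponent d (u i) * X i ^ Q = 0 := by
  have hlow : ∀ i, homogeneousComponent (d + Q) (u i * f i) = 0 := fun i =>
    homogeneousComponent_eq_zero _ _ <| (totalDegree_mul _ _).trans_lt <|
      Nat.add_lt_add_of_le_of_lt (totalDegree_le_of_homogeneousComponent_eq_zero (hu i)) (hf i)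
  simpa [mul_sub, hlow, homogeneousComponent_mul_of_isHomogeneous (isHomogeneous_X_pow _ Q),
    homogeneousComponent_eq_zero _ P (hP.trans_le (Nat.le_add_left Q d))]
    using congrArg (homogeneousComponent (d + Q)) hrep

/- `∀ k, d ≤ k → homogeneousComponent k p = 0` encodes `deg p < d`, including `p = 0` for
`d = 0`, which no bound on `totalDegree` expresses. -/
theorem exists_coeffs_degree_lt_of_sum_mul_sub_X_pow_eq (hf : ∀ i, (f i).totalDegree < Q)
    (hP : P.totalDegree < Q) (hu : ∀ i k, d < k → homogeneousComponent k (u i) = 0)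
    (hrep : ∑ i, u i * (f i - X i ^ Q) = P) :
    ∃ u' : σ → MvPolynomial σ R, (∀ i k, d ≤ k → homogeneousComponent k (u' i) = 0) ∧
      ∑ i, u' i * (f i - X i ^ Q) = P := by
  set v := fun i => homogeneousComponent d (u i)
  obtain ⟨w, hanti, hdiag, hw⟩ := exists_alternating_of_sum_mul_X_pow_eq_zero (fun _ => Q)
    Finset.univ v (sum_homogeneousComponent_mul_X_pow_eq_zero hf hP hu hrep)
  -- the degree `d - Q` part of `w` still represents the homogeneous `v`; for `d < Q`, `v = 0`
  set W := fun i j => if Q ≤ d then homogeneousComponent (d - Q) (w i j) else 0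
  have hvW : ∀ i, v i = ∑ j, W i j * X j ^ Q := fun i => calc
    v i = homogeneousComponent d (v i) :=
      (homogeneousComponent_eq_self (homogeneousComponent_isHomogeneous d (u i))).symm
    _ = ∑ j, homogeneousComponent d (w i j * X j ^ Q) := by
      rw [hw i (Finset.mem_univ i), map_sum]
    _ = ∑ j, W i j * X j ^ Q := Finset.sum_congr rfl fun j _ => by
      rw [homogeneousComponent_mul_of_isHomogeneous (isHomogeneous_X_pow _ Q)]
      split_ifs with hQ <;> simp [W, hQ]
  have hWf : ∀ i j k, d ≤ k → homogeneousComponent k (W i j * f j) = 0 := fun i j k hk => by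
    by_cases hQ : Q ≤ d
    · refine homogeneousComponent_eq_zero _ _ ((totalDegree_mul _ _).trans_lt ?_)
      have hw := (homogeneousComponent_isHomogeneous (d - Q) (w i j)).totalDegree_le
      have hfj := hf j
      simp only [W, if_pos hQ]
      omega
    · simp [W, hQ]
  refine ⟨fun i => u i + ∑ j, W i j * (f j - X j ^ Q), fun i k hk => ?_, ?_⟩
  · have hsplit : u i + ∑ j, W i j * (f j - X j ^ Q) = u i - v i + ∑ j, W i j * f j := by
      simp only [hvW i, mul_sub, Finset.sum_sub_distrib]
      ring
    beta_reduce
    rw [hsplit, map_add, map_sub, map_sum, Finset.sum_eq_zero fun j _ => hWf i j k hk, add_zero,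
      sub_eq_zero, homogeneousComponent_of_mem (homogeneousComponent_mem d (u i))]
    rcases hk.eq_or_lt with rfl | hlt
    · simp
    · simp [hlt.ne', hu i k hlt]
  · refine (Finset.sum_add_sum_mul_mul_of_alternating _ _ W (fun i j => ?_) (fun i => ?_)).trans
      hrep
    · simp only [W, hanti i j]; split_ifs <;> simp
    · simp [W, hdiag]

theorem eq_zero_of_sum_mul_sub_X_pow_eq (hf : ∀ i, (f i).totalDegree < Q)
    (hP : P.totalDegree < Q) (hrep : ∑ i, u i * (f i - X i ^ Q) = P) : P = 0 := by
  suffices key : ∀ d (u : σ → MvPolynomial σ R),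
      (∀ i k, d ≤ k → homogeneousComponent k (u i) = 0) →
      ∑ i, u i * (f i - X i ^ Q) = P → P = 0 from
    key _ u (fun i k hk => homogeneousComponent_eq_zero _ _ <|
      Nat.lt_of_succ_le <| (Finset.le_sup (f := fun i => (u i).totalDegree + 1)
        (Finset.mem_univ i)).trans hk) hrep
  intro d
  induction d with
  | zero =>
    intro u hu hrep
    have hu0 : ∀ i, u i = 0 := fun i =>
      eq_zero_of_homogeneousComponent_eq_zero fun k => hu i k k.zero_le
    simpa [hu0, eq_comm] using hrep
  | succ d ih =>
    intro u hu hrep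
    obtain ⟨u', hu', hrep'⟩ := exists_coeffs_degree_lt_of_sum_mul_sub_X_pow_eq hf hP hu hrep
    exact ih u' hu' hrep'

end Reduction

end MvPolynomial

theorem not_mem_ideal_of_degree_lt_general {K : Type} [Field K] {n : ℕ} (Q : ℕ)
    (f : Fin n → MvPolynomial (Fin n) K) (hdeg : ∀ i, (f i).totalDegree < Q)
    (P : MvPolynomial (Fin n) K) (hP : P.totalDegree < Q)
    (hmem : P ∈ Ideal.span (Set.range fun i : Fin n => f i - X i ^ Q)) :
    P = 0 := by
  obtain ⟨u, hu⟩ := Ideal.mem_span_range_iff_exists_fun.mp hmem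
  exact eq_zero_of_sum_mul_sub_X_pow_eq hdeg hP hu

/-- If `deg fᵢ < Q` and `deg P < Q`, then `P` belongs to the ideal
`(f₁ - x₁^Q, ..., f_n - x_n^Q)` only if `P = 0`. -/
theorem not_mem_ideal_of_degree_lt {K : Type} [Field K] {n : ℕ} (Q : ℕ) (hQ : 0 < Q)
    (f : Fin n → MvPolynomial (Fin n) K) (hdeg : ∀ i, (f i).totalDegree < Q)
    (P : MvPolynomial (Fin n) K) (hP : P.totalDegree < Q)
    (hmem : P ∈ Ideal.span (Set.range fun i : Fin n => f i - X i ^ Q)) :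
    P = 0 :=
  not_mem_ideal_of_degree_lt_general Q f hdeg P hP hmem
end

section
/- Let φ be an injective endomorphism of a residually finite group G. If the ascending HNN extension HNN_φ(G) is residually finite, then φ is extendable: there exists a profinite group Ḡ containing G as a dense subgroup and a continuous automorphism φ̄ of Ḡ whose restriction to G is φ. -/
def ResiduallyFinite (T : Type) [Group T] : Prop :=
  ∀ x : T, x ≠ 1 → ∃ (H : Type) (_ : Group H) (_ : Finite H) (ψ : T →* H), ψ x ≠ 1

/-! In a finite quotient of `HNN_φ(G)` the image of `G` contains its own conjugate by `t`, which
has the same cardinality, so the two coincide. Hence, in the profinite completion of `HNN_φ(G)`,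
the closures `Ḡ` of the images of `G` and of `φ(G) = t G t⁻¹` agree, i.e. conjugation by `t`
restricts to a continuous automorphism of `Ḡ`. As `φ` is injective, `G` embeds into `HNN_φ(G)`,
which embeds into its profinite completion because it is residually finite. -/

namespace Subgroup

theorem map_conj_eq_of_map_conj_le {G : Type*} [Group G] [Finite G] {A : Subgroup G} (x : G)
    (h : A.map (MulAut.conj x).toMonoidHom ≤ A) : A.map (MulAut.conj x).toMonoidHom = A :=
  eq_of_le_of_card_ge h (card_map_of_injective (MulAut.conj x).injective).ge

theorem map_mk_map_conj_eq {Γ : Type*} [Group Γ] {H : Subgroup Γ} (t : Γ)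
    (hH : H.map (MulAut.conj t).toMonoidHom ≤ H) (N : Subgroup Γ) [N.Normal] [N.FiniteIndex] :
    (H.map (MulAut.conj t).toMonoidHom).map (QuotientGroup.mk' N) =
      H.map (QuotientGroup.mk' N) := by
  have hconj : (H.map (MulAut.conj t).toMonoidHom).map (QuotientGroup.mk' N) =
      (H.map (QuotientGroup.mk' N)).map (MulAut.conj (t : Γ ⧸ N)).toMonoidHom := by
    simp only [map_map]
    rfl
  rw [hconj]
  exact map_conj_eq_of_map_conj_le _ (hconj ▸ map_mono hH)

section Topology

variable {P : Type*} [Group P] [TopologicalSpace P]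

theorem exists_mulEquiv_restrict_of_map_eq (e : P ≃* P) (he : Continuous e)
    (he' : Continuous e.symm) {K : Subgroup P} (hK : K.map e.toMonoidHom = K) :
    ∃ ψ : K ≃* K, Continuous ψ ∧ Continuous ψ.symm ∧ ∀ x, (ψ x : P) = e x := by
  have hmem : ∀ x, e x ∈ K ↔ x ∈ K := fun x => by
    simpa only [hK, MulEquiv.coe_toMonoidHom] using
      mem_map_iff_mem (f := e.toMonoidHom) e.injective (K := K) (x := x)
  refine ⟨{ toFun := fun x => ⟨e x, (hmem x).2 x.2⟩
            invFun := fun x => ⟨e.symm x, (hmem _).1 (by simp)⟩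
            left_inv := fun x => by simp
            right_inv := fun x => by simp
            map_mul' := fun x y => by ext; simp }, ?_, ?_, fun x => rfl⟩
  · exact (he.comp continuous_subtype_val).subtype_mk _
  · exact (he'.comp continuous_subtype_val).subtype_mk _

variable [IsTopologicalGroup P]

theorem _root_.MulAut.continuous_conj_symm (g : P) : Continuous (MulAut.conj g).symm :=
  (IsTopologicalGroup.continuous_conj g⁻¹).congr fun _ => by simp

theorem map_topologicalClosure_le {Q : Type*} [Group Q] [TopologicalSpace Q]
    [IsTopologicalGroup Q] (f : P →* Q) (hf : Continuous f) (H : Subgroup P) :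
    H.topologicalClosure.map f ≤ (H.map f).topologicalClosure :=
  image_closure_subset_closure_image hf

variable [CompactSpace P] [TotallyDisconnectedSpace P]

theorem map_le_topologicalClosure_map_of_map_mk_le {Γ : Type*} [Group Γ] (f : Γ →* P)
    {H H' : Subgroup Γ}
    (h : ∀ N : FiniteIndexNormalSubgroup Γ,
      H.map (QuotientGroup.mk' N.toSubgroup) ≤ H'.map (QuotientGroup.mk' N.toSubgroup)) :
    H.map f ≤ (H'.map f).topologicalClosure := by
  rintro _ ⟨a, ha, rfl⟩
  rw [← SetLike.mem_coe, topologicalClosure_coe, mem_closure_iff]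
  intro V hV haV
  obtain ⟨U, hU⟩ := ProfiniteGrp.exist_openNormalSubgroup_sub_open_nhds_of_one
    (hV.leftCoset (f a)⁻¹) ⟨f a, haV, inv_mul_cancel _⟩
  obtain ⟨b, hb, hab⟩ :=
    mem_map.1 (h (U.toFiniteIndexNormalSubgroup.comap f) ⟨a, ha, rfl⟩)
  rw [QuotientGroup.mk'_apply, QuotientGroup.mk'_apply, eq_comm, QuotientGroup.eq] at hab
  refine ⟨f b, ?_, b, hb, rfl⟩
  have hab' : (f a)⁻¹ * f b ∈ U := by rw [← map_inv, ← map_mul]; exact hab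
  exact Set.smul_mem_smul_set_iff.1 (hU hab')

theorem map_conj_topologicalClosure_map_eq {Γ : Type*} [Group Γ] (f : Γ →* P) {H : Subgroup Γ}
    (t : Γ) (hH : H.map (MulAut.conj t).toMonoidHom ≤ H) :
    (H.map f).topologicalClosure.map (MulAut.conj (f t)).toMonoidHom =
      (H.map f).topologicalClosure := by
  set c := (MulAut.conj (f t)).toMonoidHom with hc_def
  have hc : (H.map f).map c = (H.map (MulAut.conj t).toMonoidHom).map f := by
    simp only [map_map]
    congr 1
    ext
    simp [c]
  apply le_antisymm
  · calc (H.map f).topologicalClosure.map c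
        ≤ ((H.map f).map c).topologicalClosure :=
          map_topologicalClosure_le c (IsTopologicalGroup.continuous_conj _) _
      _ ≤ (H.map f).topologicalClosure := by rw [hc]; gcongr
  · have hclosed : IsClosed ((H.map f).topologicalClosure.map c : Set P) := by
      rw [hc_def, map_equiv_eq_comap_symm']
      exact (H.map f).isClosed_topologicalClosure.preimage
        (MulAut.continuous_conj_symm (f t))
    calc (H.map f).topologicalClosure
        ≤ ((H.map (MulAut.conj t).toMonoidHom).map f).topologicalClosure :=
          topologicalClosure_minimal _ (map_le_topologicalClosure_map_of_map_mk_le f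
            fun N => (map_mk_map_conj_eq t hH N.toSubgroup).ge) isClosed_closure
      _ = ((H.map f).map c).topologicalClosure := by rw [hc]
      _ ≤ (H.map f).topologicalClosure.map c :=
          topologicalClosure_minimal _ (map_mono (le_topologicalClosure _)) hclosed

end Topology

end Subgroup

theorem MonoidHom.denseRange_codRestrict_topologicalClosure {G P : Type*} [Group G] [Group P]
    [TopologicalSpace P] [IsTopologicalGroup P] (f : G →* P) :
    DenseRange (f.codRestrict f.range.topologicalClosure
      fun g => f.range.le_topologicalClosure ⟨g, rfl⟩) :=
  ((denseRange_inclusion_iff subset_closure).2 subset_rfl).comp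
    f.rangeRestrict_surjective.denseRange (continuous_inclusion subset_closure)

section HNNExt

variable {G : Type} [Group G] (φ : G →* G)

theorem mk_eq_one_of_mem_hnnRel {r : FreeGroup (G ⊕ Unit)} (hr : r ∈ hnnRel φ) :
    PresentedGroup.mk (hnnRel φ) r = 1 :=
  PresentedGroup.mk_eq_one_iff.2 (Subgroup.subset_normalClosure hr)

theorem hnnBase_mul (g h : G) : hnnBase φ g * hnnBase φ h = hnnBase φ (g * h) := by
  have := mk_eq_one_of_mem_hnnRel φ (Or.inl ⟨g, h, rfl⟩)
  simp only [map_mul, map_inv, mul_inv_eq_one] at this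
  exact this

theorem hnnT_mul_hnnBase_mul_inv (g : G) :
    hnnT φ * hnnBase φ g * (hnnT φ)⁻¹ = hnnBase φ (φ g) := by
  have := mk_eq_one_of_mem_hnnRel φ (Or.inr ⟨g, rfl⟩)
  simp only [map_mul, map_inv, mul_inv_eq_one] at this
  exact this

def hnnBaseHom : G →* HNNExt φ :=
  MonoidHom.mk' (hnnBase φ) fun g h => (hnnBase_mul φ g h).symm

theorem map_conj_hnnT_range_hnnBaseHom_le :
    (hnnBaseHom φ).range.map (MulAut.conj (hnnT φ)).toMonoidHom ≤ (hnnBaseHom φ).range := by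
  rintro _ ⟨_, ⟨g, rfl⟩, rfl⟩
  exact ⟨φ g, (hnnT_mul_hnnBase_mul_inv φ g).symm⟩

variable {φ}

noncomputable def HNNExt.toHNNExtension (hφ : Function.Injective φ) :
    HNNExt φ →*
      HNNExtension G ⊤ φ.range (Subgroup.topEquiv.trans (MonoidHom.ofInjective hφ)) :=
  PresentedGroup.toGroup (f := Sum.elim HNNExtension.of fun _ => HNNExtension.t) <| by
    rintro r (⟨g, h, rfl⟩ | ⟨g, rfl⟩)
    · simp only [map_mul, map_inv, FreeGroup.lift_apply_of, Sum.elim_inl, mul_inv_eq_one]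
    · simp only [map_mul, map_inv, FreeGroup.lift_apply_of, Sum.elim_inl, Sum.elim_inr,
        mul_inv_eq_one]
      simpa [MonoidHom.ofInjective_apply] using (HNNExtension.equiv_eq_conj
        (φ := Subgroup.topEquiv.trans (MonoidHom.ofInjective hφ)) ⟨g, trivial⟩).symm

theorem HNNExt.toHNNExtension_hnnBase (hφ : Function.Injective φ) (g : G) :
    toHNNExtension hφ (hnnBase φ g) = HNNExtension.of g :=
  PresentedGroup.toGroup.of _

theorem hnnBase_injective (hφ : Function.Injective φ) : Function.Injective (hnnBase φ) :=
  fun g g' h => HNNExtension.of_injective _ (by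
    simpa only [HNNExt.toHNNExtension_hnnBase] using congrArg (HNNExt.toHNNExtension hφ) h)

end HNNExt

theorem extendable_of_hnn_residuallyFinite_general {G : Type} [Group G]
    (φ : G →* G) (hφ : Function.Injective φ)
    (hrf : ResiduallyFinite (HNNExt φ)) :
    ∃ (Gbar : Type) (_ : Group Gbar) (_ : TopologicalSpace Gbar),
      ∃ (_ : IsTopologicalGroup Gbar) (_ : CompactSpace Gbar) (_ : T2Space Gbar)
        (_ : TotallyDisconnectedSpace Gbar) (ι : G →* Gbar),
      Function.Injective ι ∧ DenseRange ι ∧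
        ∃ ψ : Gbar ≃* Gbar, Continuous ψ ∧ Continuous ψ.symm ∧
          ∀ g : G, ψ (ι g) = ι (φ g) := by
  let j := (ProfiniteGrp.ProfiniteCompletion.eta (GrpCat.of (HNNExt φ))).hom
  have hj : Function.Injective j :=
    (ProfiniteGrp.ProfiniteCompletion.etaFn_injective_iff_residuallyFinite _).2
      (Group.residuallyFinite_of_forall_exists_finite_monoidHom hrf)
  let ι₀ := j.comp (hnnBaseHom φ)
  let K := ι₀.range.topologicalClosure
  have hK : K.map (MulAut.conj (j (hnnT φ))).toMonoidHom = K := by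
    simpa only [MonoidHom.map_range] using Subgroup.map_conj_topologicalClosure_map_eq j
      (hnnT φ) (map_conj_hnnT_range_hnnBaseHom_le φ)
  obtain ⟨ψ, hψ, hψ', hψK⟩ := Subgroup.exists_mulEquiv_restrict_of_map_eq _
    (IsTopologicalGroup.continuous_conj _) (MulAut.continuous_conj_symm _) hK
  have : CompactSpace K :=
    isCompact_iff_compactSpace.1 ι₀.range.isClosed_topologicalClosure.isCompact
  refine ⟨K, _, _, inferInstance, inferInstance, inferInstance, inferInstance,
    ι₀.codRestrict K fun g => ι₀.range.le_topologicalClosure ⟨g, rfl⟩,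
    fun g g' h => hnnBase_injective hφ (hj (congrArg Subtype.val h)),
    ι₀.denseRange_codRestrict_topologicalClosure, ψ, hψ, hψ', fun g => Subtype.ext ?_⟩
  simpa [hψK, ι₀, hnnBaseHom] using congrArg j (hnnT_mul_hnnBase_mul_inv φ g)

/-- If the ascending HNN extension of an injective endomorphism `φ` of a residually
finite group `G` is residually finite, then `φ` extends to a continuous automorphism
of a profinite group containing `G` as a dense subgroup. -/
theorem extendable_of_hnn_residuallyFinite {G : Type} [Group G]
    (hG : ResiduallyFinite G) (φ : G →* G) (hφ : Function.Injective φ)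
    (hrf : ResiduallyFinite (HNNExt φ)) :
    ∃ (Gbar : Type) (_ : Group Gbar) (_ : TopologicalSpace Gbar),
      ∃ (_ : IsTopologicalGroup Gbar) (_ : CompactSpace Gbar) (_ : T2Space Gbar)
        (_ : TotallyDisconnectedSpace Gbar) (ι : G →* Gbar),
      Function.Injective ι ∧ DenseRange ι ∧
        ∃ ψ : Gbar ≃* Gbar, Continuous ψ ∧ Continuous ψ.symm ∧
          ∀ g : G, ψ (ι g) = ι (φ g) :=
  extendable_of_hnn_residuallyFinite_general φ hφ hrf
end

section
/- Let G be a residually finite group and φ an injective endomorphism of G that extends to a continuous automorphism φ̄ of a profinite group Ḡ containing G as a dense subgroup. Then the natural homomorphism θ : HNN_φ(G) → Ḡ ⋊ ⟨φ̄⟩ sending G identically to G and the stable letter t to φ̄ is injective. -/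
/-! In `HNN_φ(G)` the relation `t g = φ(g) t` lets every `t` be moved to the right and every
`t⁻¹` to the left, so each element is `t⁻ᵃ w tᵇ` with `w ∈ G`. Its image in `Gbar ⋊ ℤ` is
`(φbar⁻ᵃ (ι w), b - a)`, which is trivial only when `a = b` and `ι w = 1`; as `ι` is injective,
the element was `t⁻ᵃ tᵃ = 1`. -/

namespace HNNExt

variable {G : Type} [Group G] (φ : G →* G)

lemma mk_eq_one_of_mem_hnnRel {r : FreeGroup (G ⊕ Unit)} (hr : r ∈ hnnRel φ) :
    PresentedGroup.mk (hnnRel φ) r = 1 :=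
  (QuotientGroup.eq_one_iff _).mpr (Subgroup.subset_normalClosure hr)

lemma hnnBase_mul (g h : G) : hnnBase φ g * hnnBase φ h = hnnBase φ (g * h) := by
  have h1 := mk_eq_one_of_mem_hnnRel φ (Or.inl ⟨g, h, rfl⟩)
  simp only [map_mul, map_inv] at h1
  exact mul_inv_eq_one.mp h1

lemma hnnBase_one : hnnBase φ (1 : G) = 1 := by
  have h := hnnBase_mul φ 1 1
  rwa [mul_one, mul_eq_left] at h

lemma hnnBase_inv (g : G) : (hnnBase φ g)⁻¹ = hnnBase φ g⁻¹ := by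
  rw [eq_comm, eq_inv_iff_mul_eq_one, hnnBase_mul, inv_mul_cancel, hnnBase_one]

lemma hnnT_mul_hnnBase (g : G) : hnnT φ * hnnBase φ g = hnnBase φ (φ g) * hnnT φ := by
  have h1 := mk_eq_one_of_mem_hnnRel φ (Or.inr ⟨g, rfl⟩)
  simp only [map_mul, map_inv] at h1
  exact mul_inv_eq_iff_eq_mul.mp (mul_inv_eq_one.mp h1)

lemma hnnT_pow_mul_hnnBase (k : ℕ) (g : G) :
    hnnT φ ^ k * hnnBase φ g = hnnBase φ (φ^[k] g) * hnnT φ ^ k := by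
  induction k with
  | zero => simp
  | succ n ih =>
    rw [pow_succ', mul_assoc, ih, ← mul_assoc, hnnT_mul_hnnBase, Function.iterate_succ_apply',
      mul_assoc, ← pow_succ']

lemma hnnBase_mul_inv_hnnT_pow (k : ℕ) (g : G) :
    hnnBase φ g * (hnnT φ ^ k)⁻¹ = (hnnT φ ^ k)⁻¹ * hnnBase φ (φ^[k] g) := by
  rw [mul_inv_eq_iff_eq_mul, mul_assoc, ← hnnT_pow_mul_hnnBase, inv_mul_cancel_left]

def normalForm (a b : ℕ) (w : G) : HNNExt φ :=
  (hnnT φ ^ a)⁻¹ * hnnBase φ w * hnnT φ ^ b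

lemma normalForm_add_mul_normalForm (a c d e : ℕ) (w v : G) :
    normalForm φ a (e + c) w * normalForm φ c d v = normalForm φ a (e + d) (w * φ^[e] v) := by
  calc normalForm φ a (e + c) w * normalForm φ c d v
      = (hnnT φ ^ a)⁻¹ * hnnBase φ w * (hnnT φ ^ e * hnnBase φ v) * hnnT φ ^ d := by
        simp only [normalForm, pow_add]; group
    _ = normalForm φ a (e + d) (w * φ^[e] v) := by
        rw [hnnT_pow_mul_hnnBase, normalForm, ← hnnBase_mul, pow_add]; group

lemma normalForm_mul_normalForm_add (a b d e : ℕ) (w v : G) :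
    normalForm φ a b w * normalForm φ (e + b) d v = normalForm φ (e + a) d (φ^[e] w * v) := by
  calc normalForm φ a b w * normalForm φ (e + b) d v
      = (hnnT φ ^ a)⁻¹ * (hnnBase φ w * (hnnT φ ^ e)⁻¹) * hnnBase φ v * hnnT φ ^ d := by
        simp only [normalForm, pow_add]; group
    _ = normalForm φ (e + a) d (φ^[e] w * v) := by
        rw [hnnBase_mul_inv_hnnT_pow, normalForm, ← hnnBase_mul, pow_add]; group

lemma exists_normalForm_mul (a b c d : ℕ) (w v : G) :
    ∃ a' b' w', normalForm φ a b w * normalForm φ c d v = normalForm φ a' b' w' := by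
  rcases le_total c b with hcb | hbc
  · obtain ⟨e, rfl⟩ := Nat.exists_eq_add_of_le' hcb
    exact ⟨_, _, _, normalForm_add_mul_normalForm φ a c d e w v⟩
  · obtain ⟨e, rfl⟩ := Nat.exists_eq_add_of_le' hbc
    exact ⟨_, _, _, normalForm_mul_normalForm_add φ a b d e w v⟩

lemma exists_normalForm (x : HNNExt φ) : ∃ a b w, normalForm φ a b w = x := by
  induction x using PresentedGroup.induction_on with
  | H z =>
  induction z using FreeGroup.induction_on with
  | C1 => exact ⟨0, 0, 1, by simp [normalForm, hnnBase_one]; rfl⟩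
  | of s =>
    rcases s with g | u
    · exact ⟨0, 0, g, by simp [normalForm]; rfl⟩
    · exact ⟨0, 1, 1, by simp [normalForm, hnnBase_one]; rfl⟩
  | inv_of s _ =>
    rcases s with g | u
    · exact ⟨0, 0, g⁻¹, by simp [normalForm, ← hnnBase_inv]; rfl⟩
    · exact ⟨1, 0, 1, by simp [normalForm, hnnBase_one]; rfl⟩
  | mul x y hx hy =>
    obtain ⟨a, b, w, hw⟩ := hx
    obtain ⟨c, d, v, hv⟩ := hy
    obtain ⟨a', b', w', h⟩ := exists_normalForm_mul φ a b c d w v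
    exact ⟨a', b', w', by rw [map_mul, ← hw, ← hv]; exact h.symm⟩

lemma normalForm_self_one (a : ℕ) : normalForm φ a a 1 = 1 := by
  simp [normalForm, hnnBase_one]

end HNNExt

namespace SemidirectProduct

variable {N H : Type} [Group N] [Group H] {ψ : H →* MulAut N}

lemma inv_inr_mul_inl_mul_inr_eq_one_iff (h h' : H) (n : N) :
    (inr h)⁻¹ * inl n * inr h' = (1 : N ⋊[ψ] H) ↔ n = 1 ∧ h = h' := by
  simp [SemidirectProduct.ext_iff, inv_mul_eq_one]

end SemidirectProduct

theorem hnn_to_semidirect_injective_general {G : Type} [Group G] (φ : G →* G)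
    (Gbar : Type) [Group Gbar] (ι : G →* Gbar) (hι : Function.Injective ι) (φbar : MulAut Gbar)
    (θ : HNNExt φ →* SemidirectProduct Gbar (Multiplicative ℤ)
      (zpowersHom (MulAut Gbar) φbar))
    (hθbase : ∀ g : G, θ (hnnBase φ g) = SemidirectProduct.inl (ι g))
    (hθt : θ (hnnT φ) = SemidirectProduct.inr (Multiplicative.ofAdd 1)) :
    Function.Injective θ := by
  rw [injective_iff_map_eq_one]
  intro x hx
  obtain ⟨a, b, w, rfl⟩ := HNNExt.exists_normalForm φ x
  have hθpow (k : ℕ) :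
      θ (hnnT φ ^ k) = SemidirectProduct.inr (Multiplicative.ofAdd (k : ℤ)) := by
    rw [map_pow, hθt, ← map_pow, ← ofAdd_nsmul, nsmul_one]
  rw [HNNExt.normalForm, map_mul, map_mul, map_inv, hθpow, hθpow, hθbase,
    SemidirectProduct.inv_inr_mul_inl_mul_inr_eq_one_iff, map_eq_one_iff ι hι] at hx
  obtain ⟨rfl, hab⟩ := hx
  obtain rfl : a = b := by simpa using hab
  exact HNNExt.normalForm_self_one φ a

/-- If an injective endomorphism `φ` of a residually finite group `G` extends to a
continuous automorphism `φbar` of a profinite group `Gbar ⊇ G` (dense), then the natural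
homomorphism `HNN_φ(G) → Gbar ⋊ ⟨φbar⟩` (identical on `G`, sending `t` to `φbar`)
is injective. -/
theorem hnn_to_semidirect_injective {G : Type} [Group G]
    (hG : ResiduallyFinite G) (φ : G →* G) (hφ : Function.Injective φ)
    (Gbar : Type) [Group Gbar] [TopologicalSpace Gbar] [IsTopologicalGroup Gbar]
    [CompactSpace Gbar] [T2Space Gbar] [TotallyDisconnectedSpace Gbar]
    (ι : G →* Gbar) (hι : Function.Injective ι) (hdense : DenseRange ι)
    (φbar : MulAut Gbar) (hcont : Continuous φbar) (hcont' : Continuous φbar.symm)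
    (hext : ∀ g : G, φbar (ι g) = ι (φ g))
    (θ : HNNExt φ →* SemidirectProduct Gbar (Multiplicative ℤ)
      (zpowersHom (MulAut Gbar) φbar))
    (hθbase : ∀ g : G, θ (hnnBase φ g) = SemidirectProduct.inl (ι g))
    (hθt : θ (hnnT φ) = SemidirectProduct.inr (Multiplicative.ofAdd 1)) :
    Function.Injective θ :=
  hnn_to_semidirect_injective_general φ Gbar ι hι φbar θ hθbase hθt
end

section
/- Let H be a finite group, n ≥ 1, and let P = H ≀ C_n be the wreath product of H with the cyclic group C_n = ⟨c⟩ of order n, i.e. the semidirect product of Hⁿ by C_n with c acting by cyclically permuting coordinates. Let h⁽⁰⁾,...,h⁽ⁿ⁻¹⁾ ∈ H^k be a periodic orbit of a map ψ : H^k → H^k given coordinatewise by words w₁,...,w_k (so h⁽ⁱ⁺¹⁾ = ψ(h⁽ⁱ⁾) and ψ(h⁽ⁿ⁻¹⁾) = h⁽⁰⁾). Define y_j ∈ Hⁿ as the tuple (h_j⁽⁰⁾, h_j⁽¹⁾,...,h_j⁽ⁿ⁻¹⁾). Then in P, for each j, c·y_j·c⁻¹ = w_j(y₁,...,y_k). 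-/
/-- The automorphism of `Hⁿ = (ZMod n → H)` cyclically shifting coordinates by `a`. -/
def shiftAut (n : ℕ) (H : Type) [Group H] (a : ZMod n) : MulAut (ZMod n → H) where
  toFun v i := v (i + a)
  invFun v i := v (i - a)
  left_inv v := by funext i; simp
  right_inv v := by funext i; simp
  map_mul' v w := rfl

/-- The action of the cyclic group `C_n = Multiplicative (ZMod n)` on `Hⁿ` by cyclic
shifts, used to form the wreath product `H ≀ C_n`. -/
def shiftHom (n : ℕ) (H : Type) [Group H] :
    Multiplicative (ZMod n) →* MulAut (ZMod n → H) where
  toFun a := shiftAut n H a.toAdd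
  map_one' := by ext v i; simp [shiftAut]
  map_mul' a b := by ext v i; exact congrArg v (by rw [toAdd_mul]; ring)

/-- In the wreath product `P = H ≀ C_n`, if `h⁽⁰⁾,...,h⁽ⁿ⁻¹⁾` is a cyclic orbit of the
map `ψ` defined coordinatewise by the words `w₁,...,w_k`, and `y_j ∈ Hⁿ` is the tuple
`(h_j⁽⁰⁾,...,h_j⁽ⁿ⁻¹⁾)`, then `c · y_j · c⁻¹ = w_j(y₁,...,y_k)`. -/
theorem wreath_conjugation (n : ℕ) (hn : 1 ≤ n) (H : Type) [Group H] [Finite H]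
    (k : ℕ) (w : Fin k → FreeGroup (Fin k))
    (hseq : ZMod n → (Fin k → H))
    (horbit : ∀ i : ZMod n,
      hseq (i + 1) = fun j => FreeGroup.lift (hseq i) (w j))
    (c : SemidirectProduct (ZMod n → H) (Multiplicative (ZMod n)) (shiftHom n H))
    (hc : c = SemidirectProduct.inr (Multiplicative.ofAdd 1))
    (y : Fin k → (ZMod n → H)) (hy : ∀ j i, y j i = hseq i j) :
    ∀ j : Fin k,
      c * SemidirectProduct.inl (y j) * c⁻¹ =
        SemidirectProduct.inl (FreeGroup.lift y (w j)) := by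
  intro j
  subst hc
  rw [← map_inv, ← SemidirectProduct.inl_aut]
  congr 1
  funext i
  show y j (i + (Multiplicative.ofAdd (1 : ZMod n)).toAdd) = _
  have hev : FreeGroup.lift y (w j) i = FreeGroup.lift (fun j' => y j' i) (w j) := by
    have h := FreeGroup.ext_hom ((Pi.evalMonoidHom (fun _ : ZMod n => H) i).comp
        (FreeGroup.lift y)) (FreeGroup.lift (fun j' => y j' i)) (fun x => by simp)
    exact DFunLike.congr_fun h (w j)
  rw [hev]
  have : (fun j' => y j' i) = hseq i := funext fun j' => hy j' i
  rw [this, hy]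
  exact congrFun (horbit i) j
end
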